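/- Let u = (u_{ij}) and v = (v_{ij}) be matrices over A such that u, ū_R, v and v̄_R are all unitary, and suppose they graded-commute: u_{ij} v_{kl} = ω^{(j-i)(l-k)} v_{kl} u_{ij} for all i,j,k,l ∈ ℤ/Nℤ. Then the matrix w with entries w_{ij} := ∑_{k ∈ ℤ/Nℤ} u_{ik} v_{kj} is unitary, and its twisted conjugate w̄_R, with entries ω^{-i(j-i)} w_{ij}*, is unitary. -/
import Mathlib


noncomputable section

/-- `ω ^ m` for `m ∈ ℤ/Nℤ`; this is well defined (independent of the chosen
representative) as soon as `ω ^ N = 1`. -/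
def wpow (N : ℕ) (ω : ℂ) (m : ZMod N) : ℂ := ω ^ m.val

/-- `z ^ m` for `m ∈ ℤ/Nℤ`; well defined when `z ^ N = 1`. -/
def apow {A : Type*} [Monoid A] (N : ℕ) (z : A) (m : ZMod N) : A := z ^ m.val

/-- The anyonic permutation relations for a family `(q i j)` indexed by `ℤ/Nℤ × ℤ/Nℤ`. -/
def AnyonicPermRel (N : ℕ) [NeZero N] (ω : ℂ) {A : Type*} [Ring A] [StarRing A]
    [Algebra ℂ A] (q : ZMod N → ZMod N → A) : Prop :=
  (∀ i : ZMod N, q 0 i = if i = 0 then 1 else 0) ∧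
  (∀ i : ZMod N, q i 0 = if i = 0 then 1 else 0) ∧
  (∀ i j : ZMod N, star (q i j) = wpow N ω (-(i * (i - j))) • q (-i) (-j)) ∧
  (∀ i j k : ZMod N, q k (i + j) =
    ∑ l : ZMod N, wpow N ω (-(l * (i - k + l))) • (q (k - l) i * q l j)) ∧
  (∀ i j k : ZMod N, q (i + j) k =
    ∑ l : ZMod N, wpow N ω (-(i * (l - j))) • (q j l * q i (k - l)))

/-- The untwisted relations for a family `(a i j)` indexed by `ℤ/Nℤ × ℤ/Nℤ`. -/
def UntwistedRel (N : ℕ) [NeZero N] {A : Type*} [Ring A] [StarRing A]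
    (a : ZMod N → ZMod N → A) : Prop :=
  (∀ i : ZMod N, a i 0 = if i = 0 then 1 else 0) ∧
  (∀ i j : ZMod N, star (a i j) = a (-i) (-j)) ∧
  (∀ i j k : ZMod N, ∑ l : ZMod N, a (k - l) i * a l j = a k (i + j)) ∧
  (∀ i j k : ZMod N, ∑ l : ZMod N, a j l * a i (k - l) = a (i + j) k)

/-- A matrix `(m i j)` over a unital `*`-algebra is unitary. -/
def IsUnitaryMatrix (N : ℕ) [NeZero N] {A : Type*} [Ring A] [StarRing A]
    (m : ZMod N → ZMod N → A) : Prop :=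
  (∀ i j : ZMod N, ∑ k : ZMod N, star (m k i) * m k j = if i = j then 1 else 0) ∧
  (∀ i j : ZMod N, ∑ k : ZMod N, m i k * star (m j k) = if i = j then 1 else 0)

/-- The twisted conjugate matrix `ū_R` with entries `ω^{-i(j-i)} u_{ij}*`. -/
def conjR (N : ℕ) (ω : ℂ) {A : Type*} [Ring A] [StarRing A] [Algebra ℂ A]
    (u : ZMod N → ZMod N → A) : ZMod N → ZMod N → A :=
  fun i j => wpow N ω (-(i * (j - i))) • star (u i j)

/-- A magic unitary: entries are projections and all rows and columns sum to `1`. -/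
def IsMagicUnitary (N : ℕ) [NeZero N] {A : Type*} [Ring A] [StarRing A]
    (u : ZMod N → ZMod N → A) : Prop :=
  (∀ i j : ZMod N, u i j * u i j = u i j) ∧
  (∀ i j : ZMod N, star (u i j) = u i j) ∧
  (∀ j : ZMod N, ∑ i : ZMod N, u i j = 1) ∧
  (∀ i : ZMod N, ∑ j : ZMod N, u i j = 1)


lemma wpow_add' (N : ℕ) [NeZero N] {ω : ℂ} (h : ω ^ N = 1) (a b : ZMod N) :
    wpow N ω (a + b) = wpow N ω a * wpow N ω b := by
  unfold wpow
  rw [← pow_add, ZMod.val_add]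
  conv_rhs => rw [← Nat.mod_add_div (a.val + b.val) N]
  rw [pow_add, pow_mul, h, one_pow, mul_one]

lemma wpow_zero' (N : ℕ) [NeZero N] (ω : ℂ) : wpow N ω 0 = 1 := by
  simp [wpow]

lemma wpow_conj (N : ℕ) [NeZero N] {ω : ℂ} (hω : IsPrimitiveRoot ω N) (m : ZMod N) :
    (starRingEnd ℂ) (wpow N ω m) = wpow N ω (-m) := by
  have h1 : ω ^ N = 1 := hω.pow_eq_one
  have hmul : wpow N ω m * wpow N ω (-m) = 1 := by
    rw [← wpow_add' N h1]; simp [wpow_zero']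
  have hnorm : ‖wpow N ω m‖ = 1 := by
    have := hω.norm'_eq_one (NeZero.ne N)
    simpa [wpow, norm_pow, this]
  have hinv : (wpow N ω m)⁻¹ = wpow N ω (-m) := inv_eq_of_mul_eq_one_right hmul
  rw [← hinv, Complex.inv_eq_conj hnorm]

lemma IsUnitaryMatrix.matmul {N : ℕ} [NeZero N] {A : Type*} [Ring A] [StarRing A]
    {m n : ZMod N → ZMod N → A} (hm : IsUnitaryMatrix N m) (hn : IsUnitaryMatrix N n) :
    IsUnitaryMatrix N (fun i j => ∑ k : ZMod N, m i k * n k j) := by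
  constructor
  · intro i j
    have key : ∀ k : ZMod N, star (∑ a : ZMod N, m k a * n a i) * (∑ b : ZMod N, m k b * n b j)
        = ∑ a : ZMod N, ∑ b : ZMod N, star (n a i) * (star (m k a) * m k b) * n b j := by
      intro k
      rw [star_sum, Finset.sum_mul]
      refine Finset.sum_congr rfl fun a _ => ?_
      rw [Finset.mul_sum]
      refine Finset.sum_congr rfl fun b _ => ?_
      simp only [star_mul, mul_assoc]
    simp only [key]
    rw [Finset.sum_comm]
    have : ∀ a : ZMod N, ∑ k : ZMod N, ∑ b : ZMod N,
        star (n a i) * (star (m k a) * m k b) * n b j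
        = ∑ b : ZMod N, star (n a i) * (∑ k : ZMod N, star (m k a) * m k b) * n b j := by
      intro a
      rw [Finset.sum_comm]
      refine Finset.sum_congr rfl fun b _ => ?_
      simp [Finset.sum_mul, Finset.mul_sum]
    simp only [this, hm.1]
    have : ∀ a : ZMod N, ∑ b : ZMod N,
        star (n a i) * (if a = b then (1:A) else 0) * n b j
        = star (n a i) * n a j := by
      intro a
      rw [Finset.sum_eq_single a]
      · simp
      · intro b _ hb; simp [Ne.symm hb]
      · simp
    simp only [this, hn.1]
  · intro i j
    have key : ∀ k : ZMod N, (∑ a : ZMod N, m i a * n a k) * star (∑ b : ZMod N, m j b * n b k)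
        = ∑ a : ZMod N, ∑ b : ZMod N, m i a * (n a k * star (n b k)) * star (m j b) := by
      intro k
      rw [star_sum, Finset.sum_mul]
      refine Finset.sum_congr rfl fun a _ => ?_
      rw [Finset.mul_sum]
      refine Finset.sum_congr rfl fun b _ => ?_
      simp only [star_mul, mul_assoc]
    simp only [key]
    rw [Finset.sum_comm]
    have : ∀ a : ZMod N, ∑ k : ZMod N, ∑ b : ZMod N,
        m i a * (n a k * star (n b k)) * star (m j b)
        = ∑ b : ZMod N, m i a * (∑ k : ZMod N, n a k * star (n b k)) * star (m j b) := by
      intro a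
      rw [Finset.sum_comm]
      refine Finset.sum_congr rfl fun b _ => ?_
      simp [Finset.sum_mul, Finset.mul_sum]
    simp only [this, hn.2]
    have : ∀ a : ZMod N, ∑ b : ZMod N,
        m i a * (if a = b then (1:A) else 0) * star (m j b)
        = m i a * star (m j a) := by
      intro a
      rw [Finset.sum_eq_single a]
      · simp
      · intro b _ hb; simp [Ne.symm hb]
      · simp
    simp only [this]
    exact hm.2 i j

theorem stmt_7 (N : ℕ) [NeZero N] (hN : 2 ≤ N) (ω : ℂ) (hω : IsPrimitiveRoot ω N)
    {A : Type*} [NormedRing A] [StarRing A] [CStarRing A]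
    [NormedAlgebra ℂ A] [CompleteSpace A] [StarModule ℂ A]
    (u v : ZMod N → ZMod N → A)
    (hu : IsUnitaryMatrix N u) (hu' : IsUnitaryMatrix N (conjR N ω u))
    (hv : IsUnitaryMatrix N v) (hv' : IsUnitaryMatrix N (conjR N ω v))
    (hcomm : ∀ i j k l : ZMod N,
      u i j * v k l = wpow N ω ((j - i) * (l - k)) • (v k l * u i j)) :
    IsUnitaryMatrix N (fun i j => ∑ k : ZMod N, u i k * v k j) ∧
    IsUnitaryMatrix N (conjR N ω (fun i j => ∑ k : ZMod N, u i k * v k j)) := by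
  have h1 : ω ^ N = 1 := hω.pow_eq_one
  refine ⟨hu.matmul hv, ?_⟩
  have hmul : conjR N ω (fun i j => ∑ k : ZMod N, u i k * v k j)
      = fun i j => ∑ k : ZMod N, conjR N ω u i k * conjR N ω v k j := by
    funext i j
    show wpow N ω (-(i * (j - i))) • star (∑ k : ZMod N, u i k * v k j) = _
    rw [star_sum, Finset.smul_sum]
    refine Finset.sum_congr rfl fun k _ => ?_
    have hc : star (v k j) * star (u i k)
        = wpow N ω (-((k - i) * (j - k))) • (star (u i k) * star (v k j)) := by
      have := congrArg star (hcomm i k k j)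
      rw [star_mul, star_smul, star_mul] at this
      rw [this]
      congr 1
      rw [Complex.star_def]
      exact wpow_conj N hω _
    rw [star_mul, hc, smul_smul, ← wpow_add' N h1]
    show wpow N ω (-(i * (j - i)) + -((k - i) * (j - k))) • (star (u i k) * star (v k j)) = _
    show _ = (wpow N ω (-(i * (k - i))) • star (u i k)) * (wpow N ω (-(k * (j - k))) • star (v k j))
    rw [smul_mul_smul_comm, ← wpow_add' N h1]
    congr 2
    ring
  rw [hmul]
  exact hu'.matmul hv'
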